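/- Let N be a finite set with |N| = n ≥ 1, let g : 2^N → ℝ be any set function, and let ρ ∈ [0, 1). Then there exist a constant w₀ ∈ ℝ and weights (w_i)_{i∈N} ∈ ℝ^N such that E_{S∼Unif(N)}[(g(S) − w₀ − Σ_{i∈S} w_i)²] ≤ (1/(1−ρ²)) · (E_{S∼Unif(N)}[g(S)²] − E_{(S,S′)∼ρ-corr(N)}[g(S)·g(S′)]). -/

import Mathlib

open Finset

/-- Expectation of a set function under the uniform distribution over subsets of `ι`. -/
noncomputable def expectU {ι : Type*} [Fintype ι] [DecidableEq ι]
    (u : Finset ι → ℝ) : ℝ :=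
  (2 ^ Fintype.card ι : ℝ)⁻¹ * ∑ S : Finset ι, u S

/-- The `ρ`-correlated joint probability `P_ρ(S, S')` on pairs of subsets of `ι`. -/
noncomputable def pCorr {ι : Type*} [Fintype ι] [DecidableEq ι]
    (ρ : ℝ) (S S' : Finset ι) : ℝ :=
  (2 ^ Fintype.card ι : ℝ)⁻¹ *
    ∏ i : ι, if (i ∈ S ↔ i ∈ S') then (1 + ρ) / 2 else (1 - ρ) / 2

/-- `E_{(S,S') ∼ ρ-corr(N)}[g(S)·g(S')]`. -/
noncomputable def corrExpect {ι : Type*} [Fintype ι] [DecidableEq ι]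
    (ρ : ℝ) (g : Finset ι → ℝ) : ℝ :=
  ∑ S : Finset ι, ∑ S' : Finset ι, pCorr ρ S S' * (g S * g S')

/-!
Expand `g` in the Walsh basis `χ_T(S) = (-1)^{|T ∩ S|}`. By Parseval `E[g²] = Σ_T ĝ(T)²`, and
since `χ_T` is an eigenfunction of the `ρ`-noise operator with eigenvalue `ρ^{|T|}`, the
correlation is `E[g(S) g(S')] = Σ_T ρ^{|T|} ĝ(T)²`. The part of `g` of degree at most one is
affine in `S`, and the remainder has mean square `Σ_{|T| ≥ 2} ĝ(T)²`; the bound then holds term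
by term because `1 - ρ² ≤ 1 - ρ^{|T|}` when `|T| ≥ 2`.
-/

namespace Fintype

variable {ι M R : Type*} [Fintype ι] [DecidableEq ι] [AddCommMonoid M] [CommSemiring R]

theorem sum_finset_prod_ite_mem (a b : ι → R) :
    ∑ S : Finset ι, ∏ i, (if i ∈ S then a i else b i) = ∏ i, (a i + b i) := by
  rw [Fintype.prod_add]
  refine Finset.sum_congr rfl fun S _ => ?_
  rw [prod_ite]
  congr 2 <;> ext <;> simp

theorem sum_filter_card_le_one (F : Finset ι → M) :
    ∑ T with #T ≤ 1, F T = F ∅ + ∑ i, F {i} := by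
  have hsplit : ({T | #T ≤ 1} : Finset (Finset ι)) =
      insert ∅ (univ.map ⟨singleton, singleton_injective⟩) := by
    ext T
    simp [Nat.le_one_iff_eq_zero_or_eq_one, card_eq_one, eq_comm]
  rw [hsplit, sum_insert (by simp), sum_map]
  rfl

end Fintype

section Walsh

variable {ι : Type*} [DecidableEq ι]

def walsh (T S : Finset ι) : ℝ := (-1) ^ #(T ∩ S)

theorem walsh_comm (T S : Finset ι) : walsh T S = walsh S T := by
  rw [walsh, walsh, inter_comm]

theorem walsh_singleton (i : ι) (S : Finset ι) : walsh {i} S = if i ∈ S then -1 else 1 := by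
  by_cases h : i ∈ S <;> simp [walsh, h]

variable [Fintype ι]

theorem walsh_eq_prod (T S : Finset ι) :
    walsh T S = ∏ i, if i ∈ S then (if i ∈ T then -1 else 1) else 1 := by
  rw [Fintype.prod_ite_mem, Finset.prod_ite_mem, prod_const, walsh, inter_comm]

theorem walsh_mul_walsh (T U S : Finset ι) :
    walsh T S * walsh U S = walsh (symmDiff T U) S := by
  simp only [walsh_eq_prod, ← prod_mul_distrib]
  refine prod_congr rfl fun i _ => ?_
  by_cases hS : i ∈ S <;> by_cases hT : i ∈ T <;> by_cases hU : i ∈ U <;>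
    simp [hS, hT, hU, mem_symmDiff]

theorem sum_walsh (T : Finset ι) :
    ∑ S, walsh T S = if T = ∅ then 2 ^ Fintype.card ι else 0 := by
  simp only [walsh_eq_prod, Fintype.sum_finset_prod_ite_mem]
  split_ifs with hT
  · simp [hT, one_add_one_eq_two]
  · obtain ⟨i, hi⟩ := nonempty_iff_ne_empty.2 hT
    exact prod_eq_zero (mem_univ i) (by simp [hi])

theorem sum_walsh_mul_walsh (T U : Finset ι) :
    ∑ S, walsh T S * walsh U S = if T = U then 2 ^ Fintype.card ι else 0 := by
  simp only [walsh_mul_walsh, sum_walsh, ← bot_eq_empty, symmDiff_eq_bot]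

noncomputable def walshCoeff (g : Finset ι → ℝ) (T : Finset ι) : ℝ :=
  expectU fun S => g S * walsh T S

theorem sum_walshCoeff_mul_walsh (g : Finset ι → ℝ) (S : Finset ι) :
    ∑ T, walshCoeff g T * walsh T S = g S := by
  calc ∑ T, walshCoeff g T * walsh T S
      = (2 ^ Fintype.card ι : ℝ)⁻¹ * ∑ S', g S' * ∑ T, walsh S' T * walsh S T := by
        simp only [walshCoeff, expectU, mul_sum, sum_mul, walsh_comm _ S]
        rw [sum_comm]
        refine sum_congr rfl fun S' _ => sum_congr rfl fun T _ => ?_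
        rw [walsh_comm T S']
        ring
    _ = g S := by
        simp only [sum_walsh_mul_walsh, mul_ite, mul_zero, sum_ite_eq', mem_univ, ↓reduceIte]
        field_simp

theorem expectU_sq_sum_mul_walsh (c : Finset ι → ℝ) :
    expectU (fun S => (∑ T, c T * walsh T S) ^ 2) = ∑ T, c T ^ 2 := by
  calc expectU (fun S => (∑ T, c T * walsh T S) ^ 2)
      = (2 ^ Fintype.card ι : ℝ)⁻¹ *
          ∑ T, ∑ U, c T * c U * ∑ S, walsh T S * walsh U S := by
        simp only [expectU, sq, sum_mul_sum]
        simp only [mul_sum]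
        rw [sum_comm]
        refine sum_congr rfl fun T _ => ?_
        rw [sum_comm]
        refine sum_congr rfl fun U _ => sum_congr rfl fun S _ => ?_
        ring
    _ = ∑ T, c T ^ 2 := by
        simp only [sum_walsh_mul_walsh, mul_ite, mul_zero, sum_ite_eq, mem_univ, ↓reduceIte,
          mul_sum]
        field_simp

theorem expectU_sq_eq_sum_walshCoeff_sq (g : Finset ι → ℝ) :
    expectU (fun S => g S ^ 2) = ∑ T, walshCoeff g T ^ 2 := by
  simpa only [sum_walshCoeff_mul_walsh] using expectU_sq_sum_mul_walsh (walshCoeff g)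

theorem sum_pCorr_mul_walsh (ρ : ℝ) (S U : Finset ι) :
    ∑ S', pCorr ρ S S' * walsh U S' =
      (2 ^ Fintype.card ι : ℝ)⁻¹ * (ρ ^ #U * walsh U S) := by
  have hfactor : ∀ S', pCorr ρ S S' * walsh U S' = (2 ^ Fintype.card ι : ℝ)⁻¹ *
      ∏ i, if i ∈ S' then
          (if i ∈ S then (1 + ρ) / 2 else (1 - ρ) / 2) * (if i ∈ U then -1 else 1)
        else if i ∈ S then (1 - ρ) / 2 else (1 + ρ) / 2 := by
    intro S'
    rw [pCorr, walsh_eq_prod, mul_assoc, ← prod_mul_distrib]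
    congr 1
    refine prod_congr rfl fun i _ => ?_
    by_cases hS : i ∈ S <;> by_cases hS' : i ∈ S' <;> simp [hS, hS']
  have hcoord : ∀ i,
      (if i ∈ S then (1 + ρ) / 2 else (1 - ρ) / 2) * (if i ∈ U then -1 else 1) +
          (if i ∈ S then (1 - ρ) / 2 else (1 + ρ) / 2) =
        (if i ∈ U then ρ else 1) * (if i ∈ U then (if i ∈ S then -1 else 1) else 1) := by
    intro i
    by_cases hS : i ∈ S <;> by_cases hU : i ∈ U <;> simp [hS, hU] <;> ring
  rw [sum_congr rfl fun S' _ => hfactor S', ← mul_sum, Fintype.sum_finset_prod_ite_mem]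
  simp_rw [hcoord, prod_mul_distrib, Fintype.prod_ite_mem, prod_const, walsh_comm U,
    walsh_eq_prod, Fintype.prod_ite_mem]

theorem corrExpect_eq_sum_pow_card_mul_walshCoeff_sq (ρ : ℝ) (g : Finset ι → ℝ) :
    corrExpect ρ g = ∑ T, ρ ^ #T * walshCoeff g T ^ 2 := by
  have hnoise : ∀ S, ∑ S', pCorr ρ S S' * g S' =
      (2 ^ Fintype.card ι : ℝ)⁻¹ * ∑ T, ρ ^ #T * walshCoeff g T * walsh T S := by
    intro S
    conv_lhs => enter [2, S']; rw [← sum_walshCoeff_mul_walsh g S']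
    simp_rw [mul_sum]
    rw [sum_comm]
    refine sum_congr rfl fun T _ => ?_
    simp_rw [mul_left_comm (pCorr ρ S _), ← mul_sum, sum_pCorr_mul_walsh]
    ring
  calc corrExpect ρ g = ∑ S, g S * ∑ S', pCorr ρ S S' * g S' := by
        refine sum_congr rfl fun S _ => ?_
        rw [mul_sum]
        exact sum_congr rfl fun S' _ => by ring
    _ = ∑ T, ρ ^ #T * walshCoeff g T *
          ((2 ^ Fintype.card ι : ℝ)⁻¹ * ∑ S, g S * walsh T S) := by
        simp_rw [hnoise, mul_sum]
        rw [sum_comm]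
        refine sum_congr rfl fun T _ => sum_congr rfl fun S _ => ?_
        ring
    _ = ∑ T, ρ ^ #T * walshCoeff g T ^ 2 :=
        sum_congr rfl fun T _ => by rw [sq, mul_assoc]; rfl

theorem sum_card_le_one_walshCoeff_mul_walsh (g : Finset ι → ℝ) (S : Finset ι) :
    ∑ T with #T ≤ 1, walshCoeff g T * walsh T S =
      (walshCoeff g ∅ + ∑ i, walshCoeff g {i}) + ∑ i ∈ S, -2 * walshCoeff g {i} := by
  have hcoord : ∀ i, walshCoeff g {i} * walsh {i} S =
      walshCoeff g {i} + if i ∈ S then -2 * walshCoeff g {i} else 0 := by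
    intro i
    rw [walsh_singleton]
    split_ifs <;> ring
  simp only [Fintype.sum_filter_card_le_one, hcoord, sum_add_distrib, sum_ite_mem, univ_inter]
  simp [walsh, add_assoc]

theorem sub_sum_card_le_one_walshCoeff_mul_walsh (g : Finset ι → ℝ) (S : Finset ι) :
    g S - ∑ T with #T ≤ 1, walshCoeff g T * walsh T S =
      ∑ T, (if 1 < #T then walshCoeff g T else 0) * walsh T S := by
  conv_lhs => rw [← sum_walshCoeff_mul_walsh g S, ← sum_filter_add_sum_filter_not _ (#· ≤ 1)]
  simp only [ite_mul, zero_mul, ← sum_filter, not_le, add_sub_cancel_left]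

end Walsh

theorem sq_ite_one_lt_le {ρ : ℝ} (hρ0 : 0 ≤ ρ) (hρ1 : ρ < 1) (k : ℕ) (x : ℝ) :
    (if 1 < k then x else 0) ^ 2 ≤ 1 / (1 - ρ ^ 2) * (x ^ 2 - ρ ^ k * x ^ 2) := by
  have hpos : 0 < 1 - ρ ^ 2 := by nlinarith
  rw [one_div, inv_mul_eq_div, le_div_iff₀ hpos]
  split_ifs with hk
  · nlinarith [pow_le_pow_of_le_one hρ0 hρ1.le hk, sq_nonneg x]
  · nlinarith [pow_le_one₀ (n := k) hρ0 hρ1.le, sq_nonneg x]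

theorem stmt_11_general {ι : Type*} [Fintype ι] [DecidableEq ι]
    (g : Finset ι → ℝ) (ρ : ℝ) (hρ0 : 0 ≤ ρ) (hρ1 : ρ < 1) :
    ∃ w₀ : ℝ, ∃ w : ι → ℝ,
      expectU (fun S => (g S - w₀ - ∑ i ∈ S, w i) ^ 2) ≤
        (1 / (1 - ρ ^ 2)) * (expectU (fun S => g S ^ 2) - corrExpect ρ g) := by
  refine ⟨walshCoeff g ∅ + ∑ i, walshCoeff g {i}, fun i => -2 * walshCoeff g {i}, ?_⟩
  simp_rw [sub_sub, ← sum_card_le_one_walshCoeff_mul_walsh,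
    sub_sum_card_le_one_walshCoeff_mul_walsh, expectU_sq_sum_mul_walsh,
    expectU_sq_eq_sum_walshCoeff_sq, corrExpect_eq_sum_pow_card_mul_walshCoeff_sq,
    ← sum_sub_distrib, mul_sum]
  exact sum_le_sum fun T _ => sq_ite_one_lt_le hρ0 hρ1 #T (walshCoeff g T)

/-- For any set function `g` and any `ρ ∈ [0,1)`, there is an affine (modular) approximation
`w₀ + Σ_{i∈S} w_i` whose mean squared error is at most
`(1/(1−ρ²)) · (E[g(S)²] − E_{(S,S')∼ρ-corr}[g(S)g(S')])`. -/
theorem stmt_11 {ι : Type*} [Fintype ι] [DecidableEq ι]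
    (hn : 1 ≤ Fintype.card ι)
    (g : Finset ι → ℝ) (ρ : ℝ) (hρ0 : 0 ≤ ρ) (hρ1 : ρ < 1) :
    ∃ w₀ : ℝ, ∃ w : ι → ℝ,
      expectU (fun S => (g S - w₀ - ∑ i ∈ S, w i) ^ 2) ≤
        (1 / (1 - ρ ^ 2)) * (expectU (fun S => g S ^ 2) - corrExpect ρ g) :=
  stmt_11_general g ρ hρ0 hρ1
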